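/- Let q : ℝ → ℝ³ be a unit-norm curve with q̇ = ω × q, and let ξ : ℝ → ℝ³ satisfy ξ·q = 0 everywhere. If δq = ξ × q and δq̇ = δω × q + ω × (ξ × q) for some δω with δω·q = 0, then ξ̇ = (q qᵀ ω̂) ξ + (I - q qᵀ) δω, where ω̂ is the skew matrix such that ω̂ x = ω × x. -/

import Mathlib

/-!
Differentiating `⟪q, ξ⟫ = 0` fixes the normal component of `ξ̇`:
`⟪q, ξ̇⟫ = -⟪ω × q, ξ⟫ = ⟪q, ω × ξ⟫`. Differentiating `ξ × q` and comparing with the given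
`δq̇` yields `ξ̇ × q = δω × q`, because `ω × (ξ × q) = ξ × (ω × q)` when `ω, ξ ⊥ q`. For a unit
vector `q` the projection `I - q qᵀ` is `v ↦ q × (v × q)`, so this fixes the tangential
component: `(I - q qᵀ) ξ̇ = (I - q qᵀ) δω`.
-/

open Matrix
open scoped InnerProductSpace

/-- `ℝ³` with the Euclidean inner product and norm. -/
abbrev E3 : Type := EuclideanSpace ℝ (Fin 3)

/-- The cross product on `ℝ³`. -/
noncomputable def cross (x y : E3) : E3 := WithLp.toLp 2 (crossProduct x y)

/-- The hat map: `hat x` is the skew-symmetric matrix with `(hat x).mulVec y = x × y`. -/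
def hat (x : E3) : Matrix (Fin 3) (Fin 3) ℝ :=
  !![0, -x 2, x 1; x 2, 0, -x 0; -x 1, x 0, 0]

lemma EuclideanSpace.real_inner_eq_dotProduct {ι : Type*} [Fintype ι] (x y : EuclideanSpace ℝ ι) :
    ⟪x, y⟫_ℝ = ⇑x ⬝ᵥ ⇑y := by
  simp [EuclideanSpace.inner_eq_star_dotProduct, dotProduct_comm]

section CrossProduct

variable {R : Type*} [CommRing R]

lemma cross_cross_comm_of_dotProduct_eq_zero {u v w : Fin 3 → R}
    (hu : u ⬝ᵥ w = 0) (hv : v ⬝ᵥ w = 0) : u ⨯₃ (v ⨯₃ w) = v ⨯₃ (u ⨯₃ w) := by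
  rw [cross_cross_eq_smul_sub_smul', cross_cross_eq_smul_sub_smul', hu, hv, dotProduct_comm]
  simp

lemma one_sub_vecMulVec_self_mulVec {q : Fin 3 → R} (hq : q ⬝ᵥ q = 1) (v : Fin 3 → R) :
    (1 - vecMulVec q q) *ᵥ v = q ⨯₃ (v ⨯₃ q) := by
  rw [cross_cross_eq_smul_sub_smul', hq, sub_mulVec, one_mulVec, vecMulVec_mulVec,
    op_smul_eq_smul, one_smul, dotProduct_comm]

end CrossProduct

lemma ofLp_cross (x y : E3) : ⇑(cross x y) = ⇑x ⨯₃ ⇑y := rfl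

lemma hat_mulVec (x : E3) (y : Fin 3 → ℝ) : hat x *ᵥ y = ⇑x ⨯₃ y := by
  ext i
  fin_cases i <;> simp [hat, cross_apply, mulVec, dotProduct, Fin.sum_univ_three] <;> ring

noncomputable def crossBilin : E3 →L[ℝ] E3 →L[ℝ] E3 :=
  ((crossProduct.compl₁₂ (WithLp.linearEquiv 2 ℝ (Fin 3 → ℝ)).toLinearMap
    (WithLp.linearEquiv 2 ℝ (Fin 3 → ℝ)).toLinearMap).compr₂
    (WithLp.linearEquiv 2 ℝ (Fin 3 → ℝ)).symm.toLinearMap).toContinuousBilinearMap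

lemma HasDerivAt.cross {u v : ℝ → E3} {u' v' : E3} {t : ℝ}
    (hu : HasDerivAt u u' t) (hv : HasDerivAt v v' t) :
    HasDerivAt (fun s => cross (u s) (v s)) (cross u' (v t) + cross (u t) v') t := by
  rw [add_comm]
  exact crossBilin.hasDerivAt_of_bilinear (fun _ => hu) (fun _ => hv)

lemma inner_eq_neg_of_hasDerivAt_of_inner_eq_zero {F : Type*} [NormedAddCommGroup F]
    [InnerProductSpace ℝ F] {f g : ℝ → F} {f' g' : F} {t : ℝ}
    (hf : HasDerivAt f f' t) (hg : HasDerivAt g g' t) (h : ∀ s, ⟪f s, g s⟫_ℝ = 0) :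
    ⟪f t, g'⟫_ℝ = -⟪f', g t⟫_ℝ := by
  have hzero : HasDerivAt (fun s => ⟪f s, g s⟫_ℝ) 0 t := by
    simpa only [h] using hasDerivAt_const t (0 : ℝ)
  exact eq_neg_of_add_eq_zero_left ((hf.inner ℝ hg).unique hzero)

theorem linearized_kinematics_on_sphere_general
    (q ω ξ δω ξ' : ℝ → E3)
    (hunit : ∀ t : ℝ, ‖q t‖ = 1)
    (horthω : ∀ t : ℝ, ⟪q t, ω t⟫_ℝ = 0)
    (horthξ : ∀ t : ℝ, ⟪q t, ξ t⟫_ℝ = 0)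
    (hq : ∀ t : ℝ, HasDerivAt q (cross (ω t) (q t)) t)
    (hξ : ∀ t : ℝ, HasDerivAt ξ (ξ' t) t)
    (hδq : ∀ t : ℝ, HasDerivAt (fun s => cross (ξ s) (q s))
      (cross (δω t) (q t) + cross (ω t) (cross (ξ t) (q t))) t) :
    ∀ t : ℝ, ξ' t =
      (vecMulVec (q t) (q t) * hat (ω t)).mulVec (ξ t)
        + ((1 : Matrix (Fin 3) (Fin 3) ℝ) - vecMulVec (q t) (q t)).mulVec (δω t) := by
  intro t
  have hqq : ⇑(q t) ⬝ᵥ ⇑(q t) = 1 := by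
    rw [← EuclideanSpace.real_inner_eq_dotProduct, real_inner_self_eq_norm_sq, hunit, one_pow]
  have hωq : ⇑(ω t) ⬝ᵥ ⇑(q t) = 0 := by
    rw [dotProduct_comm, ← EuclideanSpace.real_inner_eq_dotProduct, horthω]
  have hξq : ⇑(ξ t) ⬝ᵥ ⇑(q t) = 0 := by
    rw [dotProduct_comm, ← EuclideanSpace.real_inner_eq_dotProduct, horthξ]
  have hnormal : ⇑(q t) ⬝ᵥ ⇑(ξ' t) = ⇑(q t) ⬝ᵥ ⇑(ω t) ⨯₃ ⇑(ξ t) := by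
    have h := inner_eq_neg_of_hasDerivAt_of_inner_eq_zero (hq t) (hξ t) horthξ
    simp only [EuclideanSpace.real_inner_eq_dotProduct, ofLp_cross] at h
    rw [h, dotProduct_comm, ← cross_anticomm, dotProduct_neg, neg_neg, triple_product_permutation]
  have htangent : ⇑(ξ' t) ⨯₃ ⇑(q t) = ⇑(δω t) ⨯₃ ⇑(q t) := by
    have h := congrArg WithLp.ofLp (((hξ t).cross (hq t)).unique (hδq t))
    simp only [WithLp.ofLp_add, ofLp_cross] at h
    rwa [cross_cross_comm_of_dotProduct_eq_zero hξq hωq, add_left_inj] at h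
  calc ⇑(ξ' t) = vecMulVec (q t) (q t) *ᵥ ⇑(ξ' t)
        + (1 - vecMulVec ⇑(q t) ⇑(q t)) *ᵥ ⇑(ξ' t) := by
        rw [sub_mulVec, one_mulVec, add_sub_cancel]
    _ = vecMulVec (q t) (q t) *ᵥ (⇑(ω t) ⨯₃ ⇑(ξ t))
        + (1 - vecMulVec ⇑(q t) ⇑(q t)) *ᵥ ⇑(δω t) := by
        rw [vecMulVec_mulVec, vecMulVec_mulVec, hnormal, one_sub_vecMulVec_self_mulVec hqq,
          one_sub_vecMulVec_self_mulVec hqq, htangent]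
    _ = _ := by rw [← mulVec_mulVec, hat_mulVec]

/-- Linearized attitude kinematics on `S²`: if `δq = ξ × q` and
`δq̇ = δω × q + ω × (ξ × q)`, then `ξ̇ = (q qᵀ ω̂) ξ + (I - q qᵀ) δω`. -/
theorem linearized_kinematics_on_sphere
    (q ω ξ δω ξ' : ℝ → E3)
    (hunit : ∀ t : ℝ, ‖q t‖ = 1)
    (horthω : ∀ t : ℝ, ⟪q t, ω t⟫_ℝ = 0)
    (horthξ : ∀ t : ℝ, ⟪q t, ξ t⟫_ℝ = 0)
    (horthδω : ∀ t : ℝ, ⟪q t, δω t⟫_ℝ = 0)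
    (hq : ∀ t : ℝ, HasDerivAt q (cross (ω t) (q t)) t)
    (hξ : ∀ t : ℝ, HasDerivAt ξ (ξ' t) t)
    (hδq : ∀ t : ℝ, HasDerivAt (fun s => cross (ξ s) (q s))
      (cross (δω t) (q t) + cross (ω t) (cross (ξ t) (q t))) t) :
    ∀ t : ℝ, ξ' t =
      (vecMulVec (q t) (q t) * hat (ω t)).mulVec (ξ t)
        + ((1 : Matrix (Fin 3) (Fin 3) ℝ) - vecMulVec (q t) (q t)).mulVec (δω t) :=
  linearized_kinematics_on_sphere_general q ω ξ δω ξ' hunit horthω horthξ hq hξ hδq
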